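/- Let α be an assembly producible at temperature τ in the hierarchical model, realized by an assembly tree Υ (so Υ is a hierarchical division of dom α in which the two children sets of every internal node have attachment strength at least τ in α). If a merging process maintains a partition 𝒞 of dom α, initialized to singletons, and repeatedly replaces any two parts with attachment strength at least τ by their union, then at every step with |𝒞| > 1 such a mergeable pair exists, and moreover the sequence of merges performed itself determines an assembly tree of α; hence the process always terminates with the partition {dom α} and constitutes a correct decision procedure for producibility of α. -/

import Mathlib

/-- A tile system over a type `T` of tile types: each tile type has, in each
direction (unit vector of `ℤ × ℤ`), a glue label (a natural number `ℕ`), and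
each glue label has a nonnegative integer strength given by `str`. -/
structure TileSystem (T : Type) where
  glue : T → ℤ × ℤ → ℕ
  str : ℕ → ℕ

/-- The four unit-vector directions of `ℤ²`. -/
def dirs : Finset (ℤ × ℤ) := {(0,1), (0,-1), (1,0), (-1,0)}

/-- An assembly: a partial function from `ℤ²` to tile types. -/
abbrev Assembly (T : Type) := ℤ × ℤ → Option T

/-- `D` is the domain of the assembly `α`. -/
def IsDom {T : Type} (α : Assembly T) (D : Finset (ℤ × ℤ)) : Prop :=
  ∀ p, (α p).isSome ↔ p ∈ D

/-- The strength of the bond between positions `p` and `q` in `α`: it is the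
strength of the common glue if `q - p` is a unit direction and the glue of the
tile at `p` in direction `q - p` matches the glue of the tile at `q` in
direction `p - q`; otherwise `0`. -/
def bond {T : Type} (ts : TileSystem T) (α : Assembly T) (p q : ℤ × ℤ) : ℕ :=
  match α p, α q with
  | some t, some t' =>
      if q - p ∈ dirs ∧ ts.glue t (q - p) = ts.glue t' (p - q)
      then ts.str (ts.glue t (q - p)) else 0
  | _, _ => 0

/-- Two positions of `α` interact if they hold tiles binding with positive strength. -/
def Interacts {T : Type} (ts : TileSystem T) (α : Assembly T) (p q : ℤ × ℤ) : Prop :=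
  0 < bond ts α p q

/-- Total strength of the interacting glues between positions in `A` and
(adjacent) positions in `B`. -/
def strengthBetween {T : Type} (ts : TileSystem T) (α : Assembly T)
    (A B : Finset (ℤ × ℤ)) : ℕ :=
  ∑ p ∈ A, ∑ q ∈ B, bond ts α p q

/-- `α` is `τ`-stable: every partition of its domain into two nonempty parts is
crossed by interacting glues of total strength at least `τ`. -/
def Stable {T : Type} (ts : TileSystem T) (α : Assembly T) (τ : ℕ) : Prop :=
  ∀ D A B : Finset (ℤ × ℤ), IsDom α D → A ∪ B = D → Disjoint A B →
    A.Nonempty → B.Nonempty → τ ≤ strengthBetween ts α A B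

/-- The union of two assemblies (agreeing with `α` wherever `α` is defined). -/
def aunion {T : Type} (α β : Assembly T) : Assembly T :=
  fun p => match α p with
    | some t => some t
    | none => β p

/-- Producibility in the hierarchical model at temperature `τ`: an assembly is
producible if it is a single tile, or the `τ`-stable union of two producible
assemblies with disjoint domains. -/
inductive Producible {T : Type} (ts : TileSystem T) (τ : ℕ) : Assembly T → Prop where
  | single (p : ℤ × ℤ) (t : T) :
      Producible ts τ (fun q => if q = p then some t else none)
  | union {α β : Assembly T} :
      Producible ts τ α → Producible ts τ β →
      (∀ p, α p = none ∨ β p = none) →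
      Stable ts (aunion α β) τ →
      Producible ts τ (aunion α β)

/-- Two assemblies are consistent if they agree wherever both are defined. -/
def Consistent {T : Type} (α β : Assembly T) : Prop :=
  ∀ p t t', α p = some t → β p = some t' → t = t'

/-- `α` is a subassembly of `β`. -/
def Subassembly {T : Type} (α β : Assembly T) : Prop :=
  ∀ p t, α p = some t → β p = some t

/-- A producible assembly is terminal if no producible assembly can stably attach to it. -/
def Terminal {T : Type} (ts : TileSystem T) (τ : ℕ) (α : Assembly T) : Prop :=
  ∀ β : Assembly T, Producible ts τ β → (∀ p, α p = none ∨ β p = none) →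
    ¬ Stable ts (aunion α β) τ

/-- The hierarchical system uniquely produces `α` if the set of producible
terminal assemblies equals `{α}`. -/
def UniquelyProduces {T : Type} (ts : TileSystem T) (τ : ℕ) (α : Assembly T) : Prop :=
  {γ : Assembly T | Producible ts τ γ ∧ Terminal ts τ γ} = {α}

/-- `𝒞` is a partition of the finite set `D`: pairwise disjoint nonempty parts
whose union is `D`. -/
def IsPartition (𝒞 : Finset (Finset (ℤ × ℤ))) (D : Finset (ℤ × ℤ)) : Prop :=
  (∀ C ∈ 𝒞, C.Nonempty) ∧
  (∀ C₁ ∈ 𝒞, ∀ C₂ ∈ 𝒞, C₁ ≠ C₂ → Disjoint C₁ C₂) ∧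
  𝒞.sup id = D

/-- One merge step on partitions of the domain of `α`: replace two distinct
parts whose attachment strength in `α` is at least `τ` by their union. -/
def MergeStep {T : Type} (ts : TileSystem T) (α : Assembly T) (τ : ℕ)
    (𝒞 𝒞' : Finset (Finset (ℤ × ℤ))) : Prop :=
  ∃ C₁ ∈ 𝒞, ∃ C₂ ∈ 𝒞, C₁ ≠ C₂ ∧ τ ≤ strengthBetween ts α C₁ C₂ ∧
    𝒞' = insert (C₁ ∪ C₂) ((𝒞.erase C₁).erase C₂)

/-- The partition of `D` into singletons. -/
def singletonsPart (D : Finset (ℤ × ℤ)) : Finset (Finset (ℤ × ℤ)) :=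
  D.image (fun p => {p})

/-- A merge sequence for `α` (with domain `D`) at temperature `τ`: a sequence of
partitions starting with the singleton partition, each subsequent one obtained
from the previous by a merge step. -/
def IsMergeSeq {T : Type} (ts : TileSystem T) (α : Assembly T) (τ : ℕ)
    (D : Finset (ℤ × ℤ)) (L : List (Finset (Finset (ℤ × ℤ)))) : Prop :=
  L.head? = some (singletonsPart D) ∧ L.Chain' (MergeStep ts α τ)

/-- A full binary tree with leaves labeled by positions. -/
inductive BTree where
  | leaf : ℤ × ℤ → BTree
  | node : BTree → BTree → BTree

/-- The set represented by a node: the set of labels of its leaves. -/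
def BTree.leaves : BTree → Finset (ℤ × ℤ)
  | .leaf x => {x}
  | .node l r => l.leaves ∪ r.leaves

/-- `Υ` is an assembly tree for `α` at temperature `τ`: at every internal node
the children's sets are disjoint and have attachment strength at least `τ` in `α`. -/
def BTree.IsAssemblyTree {T : Type} (ts : TileSystem T) (α : Assembly T) (τ : ℕ) :
    BTree → Prop
  | .leaf _ => True
  | .node l r => Disjoint l.leaves r.leaves ∧
      τ ≤ strengthBetween ts α l.leaves r.leaves ∧
      l.IsAssemblyTree ts α τ ∧ r.IsAssemblyTree ts α τ

/-- The restriction of an assembly to a set of positions. -/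
def restrict {T : Type} (α : Assembly T) (C : Finset (ℤ × ℤ)) : Assembly T :=
  fun p => if p ∈ C then α p else none

/-! Fix an assembly tree `Υ` of `α` and a partition `𝒞` of `dom α`. Walking up `Υ`, as long as
the two children of a node each lie inside a part of `𝒞`, either they lie in the same part, or
these two distinct parts contain sets of attachment strength `≥ τ` and hence are mergeable
themselves. So the greedy process can only get stuck when the root lies in one part, i.e.
`𝒞 = {dom α}`. Moreover every part created by the process is producible: a cut of `C₁ ∪ C₂`
either cuts one of the stable parts `Cᵢ`, or separates `C₁` from `C₂`, and is then crossed by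
glues of strength `≥ τ`. -/

lemma neg_mem_dirs {d : ℤ × ℤ} (h : d ∈ dirs) : -d ∈ dirs := by
  simp only [dirs, Finset.mem_insert, Finset.mem_singleton] at h ⊢
  rcases h with rfl | rfl | rfl | rfl <;> simp

lemma sub_mem_dirs_comm (p q : ℤ × ℤ) : q - p ∈ dirs ↔ p - q ∈ dirs :=
  ⟨fun h => neg_sub q p ▸ neg_mem_dirs h, fun h => neg_sub p q ▸ neg_mem_dirs h⟩

lemma Finset.subset_or_subset_or_inter_nonempty_of_subset_union {β : Type*} [DecidableEq β]
    {A B C : Finset β} (h : C ⊆ A ∪ B) :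
    C ⊆ A ∨ C ⊆ B ∨ ((A ∩ C).Nonempty ∧ (B ∩ C).Nonempty) := by
  by_cases hA : (A ∩ C).Nonempty
  · by_cases hB : (B ∩ C).Nonempty
    · exact .inr (.inr ⟨hA, hB⟩)
    · refine .inl (Disjoint.left_le_of_le_sup_right h ?_)
      rwa [Finset.disjoint_iff_inter_eq_empty, Finset.inter_comm, ← Finset.not_nonempty_iff_eq_empty]
  · refine .inr (.inl (Disjoint.left_le_of_le_sup_left h ?_))
    rwa [Finset.disjoint_iff_inter_eq_empty, Finset.inter_comm, ← Finset.not_nonempty_iff_eq_empty]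

section Strength

variable {T : Type} (ts : TileSystem T) (α : Assembly T)

lemma bond_comm (p q : ℤ × ℤ) : bond ts α p q = bond ts α q p := by
  unfold bond
  cases α p <;> cases α q <;> try rfl
  rename_i t t'
  simp only [sub_mem_dirs_comm p q, eq_comm (a := ts.glue t' (p - q))]
  split_ifs with h <;> simp_all

lemma strengthBetween_comm (A B : Finset (ℤ × ℤ)) :
    strengthBetween ts α A B = strengthBetween ts α B A := by
  unfold strengthBetween
  rw [Finset.sum_comm]
  simp only [bond_comm ts α]

variable {ts α}

lemma strengthBetween_mono {A A' B B' : Finset (ℤ × ℤ)} (hA : A ⊆ A') (hB : B ⊆ B') :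
    strengthBetween ts α A B ≤ strengthBetween ts α A' B' :=
  (Finset.sum_le_sum fun _ _ => Finset.sum_le_sum_of_subset hB).trans
    (Finset.sum_le_sum_of_subset hA)

lemma strengthBetween_restrict_of_subset {A B C : Finset (ℤ × ℤ)} (hA : A ⊆ C) (hB : B ⊆ C) :
    strengthBetween ts (restrict α C) A B = strengthBetween ts α A B := by
  refine Finset.sum_congr rfl fun p hp => Finset.sum_congr rfl fun q hq => ?_
  simp only [bond, restrict, if_pos (hA hp), if_pos (hB hq)]

end Strength

def StableOn {T : Type} (ts : TileSystem T) (α : Assembly T) (τ : ℕ) (C : Finset (ℤ × ℤ)) :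
    Prop :=
  ∀ A B : Finset (ℤ × ℤ), A ∪ B = C → Disjoint A B → A.Nonempty → B.Nonempty →
    τ ≤ strengthBetween ts α A B

section Stability

variable {T : Type} {ts : TileSystem T} {α : Assembly T} {τ : ℕ}

lemma IsDom.unique {D D' : Finset (ℤ × ℤ)} (h : IsDom α D) (h' : IsDom α D') : D = D' := by
  ext p
  rw [← h p, h' p]

lemma isDom_restrict {C D : Finset (ℤ × ℤ)} (hD : IsDom α D) (hC : C ⊆ D) :
    IsDom (restrict α C) C := by
  intro p
  by_cases hp : p ∈ C
  · simpa [restrict, hp] using (hD p).mpr (hC hp)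
  · simp [restrict, hp]

lemma stable_restrict_iff {C D : Finset (ℤ × ℤ)} (hD : IsDom α D) (hC : C ⊆ D) :
    Stable ts (restrict α C) τ ↔ StableOn ts α τ C := by
  have hdom := isDom_restrict hD hC
  constructor
  · intro h A B hAB hdis hA hB
    rw [← strengthBetween_restrict_of_subset (hAB ▸ Finset.subset_union_left)
      (hAB ▸ Finset.subset_union_right)]
    exact h C A B hdom hAB hdis hA hB
  · rintro h D' A B hD' hAB hdis hA hB
    obtain rfl := hD'.unique hdom
    rw [strengthBetween_restrict_of_subset (hAB ▸ Finset.subset_union_left)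
      (hAB ▸ Finset.subset_union_right)]
    exact h A B hAB hdis hA hB

lemma StableOn.le_strengthBetween {A B C : Finset (ℤ × ℤ)} (h : StableOn ts α τ C)
    (hC : C ⊆ A ∪ B) (hdis : Disjoint A B) (hA : (A ∩ C).Nonempty) (hB : (B ∩ C).Nonempty) :
    τ ≤ strengthBetween ts α A B := by
  have hcut : A ∩ C ∪ B ∩ C = C := by
    rw [← Finset.union_inter_distrib_right, Finset.inter_eq_right.mpr hC]
  exact (h _ _ hcut (hdis.mono Finset.inter_subset_left Finset.inter_subset_left) hA hB).trans
    (strengthBetween_mono Finset.inter_subset_left Finset.inter_subset_left)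

lemma StableOn.union {C₁ C₂ : Finset (ℤ × ℤ)} (h₁ : StableOn ts α τ C₁)
    (h₂ : StableOn ts α τ C₂) (hcross : τ ≤ strengthBetween ts α C₁ C₂) :
    StableOn ts α τ (C₁ ∪ C₂) := by
  intro A B hAB hdis hA hB
  have hC₁ : C₁ ⊆ A ∪ B := hAB ▸ Finset.subset_union_left
  have hC₂ : C₂ ⊆ A ∪ B := hAB ▸ Finset.subset_union_right
  have empty_of_subset {X Y : Finset (ℤ × ℤ)} (hXY : Disjoint X Y) (hY : Y ⊆ X) : Y = ∅ :=
    (Finset.disjoint_self_iff_empty Y).mp (hXY.mono_left hY)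
  rcases Finset.subset_or_subset_or_inter_nonempty_of_subset_union hC₁ with h1A | h1B | ⟨hA₁, hB₁⟩
  · rcases Finset.subset_or_subset_or_inter_nonempty_of_subset_union hC₂ with
      h2A | h2B | ⟨hA₂, hB₂⟩
    · exact absurd (empty_of_subset hdis (hAB ▸ Finset.subset_union_right |>.trans
        (Finset.union_subset h1A h2A))) hB.ne_empty
    · exact hcross.trans (strengthBetween_mono h1A h2B)
    · exact h₂.le_strengthBetween hC₂ hdis hA₂ hB₂
  · rcases Finset.subset_or_subset_or_inter_nonempty_of_subset_union hC₂ with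
      h2A | h2B | ⟨hA₂, hB₂⟩
    · rw [strengthBetween_comm] at hcross
      exact hcross.trans (strengthBetween_mono h2A h1B)
    · exact absurd (empty_of_subset hdis.symm (hAB ▸ Finset.subset_union_left |>.trans
        (Finset.union_subset h1B h2B))) hA.ne_empty
    · exact h₂.le_strengthBetween hC₂ hdis hA₂ hB₂
  · exact h₁.le_strengthBetween hC₁ hdis hA₁ hB₁

lemma Producible.stable {β : Assembly T} (h : Producible ts τ β) : Stable ts β τ := by
  induction h with
  | single p t =>
    intro D A B hdom hAB hdis ⟨a, ha⟩ ⟨b, hb⟩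
    have eq_p {q : ℤ × ℤ} (hq : q ∈ D) : q = p := by
      by_contra hqp
      simpa [hqp] using (hdom q).mpr hq
    have hab : a = b := (eq_p (hAB ▸ Finset.mem_union_left B ha)).trans
      (eq_p (hAB ▸ Finset.mem_union_right A hb)).symm
    exact absurd (hab ▸ ha) (Finset.disjoint_right.mp hdis hb)
  | union _ _ _ hstable => exact hstable

lemma restrict_union_eq_aunion (C₁ C₂ : Finset (ℤ × ℤ)) :
    restrict α (C₁ ∪ C₂) = aunion (restrict α C₁) (restrict α C₂) := by
  funext p
  unfold restrict aunion
  by_cases h₁ : p ∈ C₁ <;> by_cases h₂ : p ∈ C₂ <;> simp [h₁, h₂] <;> cases α p <;> rfl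

lemma producible_restrict_singleton {D : Finset (ℤ × ℤ)} (hD : IsDom α D) {p : ℤ × ℤ}
    (hp : p ∈ D) : Producible ts τ (restrict α {p}) := by
  obtain ⟨t, ht⟩ := Option.isSome_iff_exists.mp ((hD p).mpr hp)
  have hsingle : restrict α {p} = fun q => if q = p then some t else none := by
    funext q
    by_cases hq : q = p <;> simp [restrict, hq, ht]
  exact hsingle ▸ Producible.single p t

lemma producible_restrict_union {C₁ C₂ D : Finset (ℤ × ℤ)} (hD : IsDom α D) (hC₁ : C₁ ⊆ D)
    (hC₂ : C₂ ⊆ D) (hdis : Disjoint C₁ C₂) (h₁ : Producible ts τ (restrict α C₁))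
    (h₂ : Producible ts τ (restrict α C₂)) (hcross : τ ≤ strengthBetween ts α C₁ C₂) :
    Producible ts τ (restrict α (C₁ ∪ C₂)) := by
  have hstable : Stable ts (restrict α (C₁ ∪ C₂)) τ :=
    (stable_restrict_iff hD (Finset.union_subset hC₁ hC₂)).mpr <|
      ((stable_restrict_iff hD hC₁).mp h₁.stable).union
        ((stable_restrict_iff hD hC₂).mp h₂.stable) hcross
  rw [restrict_union_eq_aunion] at hstable ⊢
  refine .union h₁ h₂ (fun p => ?_) hstable
  by_cases hp : p ∈ C₁
  · exact .inr (if_neg (Finset.disjoint_left.mp hdis hp))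
  · exact .inl (if_neg hp)

end Stability

namespace IsPartition

variable {𝒞 : Finset (Finset (ℤ × ℤ))} {C D : Finset (ℤ × ℤ)}

lemma subset (h : IsPartition 𝒞 D) (hC : C ∈ 𝒞) : C ⊆ D :=
  h.2.2 ▸ Finset.le_sup (f := id) hC

lemma exists_mem (h : IsPartition 𝒞 D) {x : ℤ × ℤ} (hx : x ∈ D) : ∃ C ∈ 𝒞, x ∈ C := by
  rw [← h.2.2] at hx
  simpa using Finset.mem_sup.mp hx

lemma eq_singleton_of_mem (h : IsPartition 𝒞 D) (hD : D ∈ 𝒞) : 𝒞 = {D} := by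
  refine Finset.eq_singleton_iff_unique_mem.mpr ⟨hD, fun C hC => ?_⟩
  by_contra hCD
  obtain ⟨x, hx⟩ := h.1 C hC
  exact Finset.disjoint_left.mp (h.2.1 C hC D hD hCD) hx (h.subset hC hx)

end IsPartition

lemma isPartition_singletonsPart (D : Finset (ℤ × ℤ)) : IsPartition (singletonsPart D) D := by
  refine ⟨?_, ?_, ?_⟩
  · simp only [singletonsPart, Finset.mem_image]
    rintro _ ⟨p, -, rfl⟩
    exact Finset.singleton_nonempty p
  · simp only [singletonsPart, Finset.mem_image]
    rintro _ ⟨p, -, rfl⟩ _ ⟨q, -, rfl⟩ hpq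
    exact Finset.disjoint_singleton.mpr (ne_of_apply_ne _ hpq)
  · ext p
    simp [singletonsPart]

section Merging

variable {T : Type} {ts : TileSystem T} {α : Assembly T} {τ : ℕ}
  {𝒞 𝒞' : Finset (Finset (ℤ × ℤ))} {D : Finset (ℤ × ℤ)}

lemma MergeStep.isPartition (hstep : MergeStep ts α τ 𝒞 𝒞') (h𝒞 : IsPartition 𝒞 D) :
    IsPartition 𝒞' D := by
  obtain ⟨C₁, hC₁, C₂, hC₂, hne, -, rfl⟩ := hstep
  obtain ⟨hnonempty, hdisj, hsup⟩ := h𝒞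
  set R := (𝒞.erase C₁).erase C₂
  have mem_R {C : Finset (ℤ × ℤ)} (hC : C ∈ R) : C ∈ 𝒞 ∧ C ≠ C₁ ∧ C ≠ C₂ := by
    simp only [R, Finset.mem_erase] at hC
    exact ⟨hC.2.2, hC.2.1, hC.1⟩
  have disjoint_R {C : Finset (ℤ × ℤ)} (hC : C ∈ R) : Disjoint (C₁ ∪ C₂) C :=
    Finset.disjoint_union_left.mpr ⟨hdisj C₁ hC₁ C (mem_R hC).1 (mem_R hC).2.1.symm,
      hdisj C₂ hC₂ C (mem_R hC).1 (mem_R hC).2.2.symm⟩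
  have h𝒞R : 𝒞 = insert C₁ (insert C₂ R) := by
    rw [Finset.insert_erase (Finset.mem_erase.mpr ⟨hne.symm, hC₂⟩), Finset.insert_erase hC₁]
  refine ⟨?_, ?_, ?_⟩
  · simp only [Finset.mem_insert, forall_eq_or_imp]
    exact ⟨(hnonempty C₁ hC₁).mono Finset.subset_union_left,
      fun C hC => hnonempty C (mem_R hC).1⟩
  · simp only [Finset.mem_insert]
    rintro A (rfl | hA) B (rfl | hB) hAB
    · exact absurd rfl hAB
    · exact disjoint_R hB
    · exact (disjoint_R hA).symm
    · exact hdisj A (mem_R hA).1 B (mem_R hB).1 hAB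
  · rw [← hsup, h𝒞R]
    simp only [Finset.sup_insert, id]
    exact sup_assoc _ _ _

lemma MergeStep.producible (hstep : MergeStep ts α τ 𝒞 𝒞') (hD : IsDom α D)
    (h𝒞 : IsPartition 𝒞 D) (hprod : ∀ C ∈ 𝒞, Producible ts τ (restrict α C)) :
    ∀ C ∈ 𝒞', Producible ts τ (restrict α C) := by
  obtain ⟨C₁, hC₁, C₂, hC₂, hne, hcross, rfl⟩ := hstep
  simp only [Finset.mem_insert, forall_eq_or_imp]
  exact ⟨producible_restrict_union hD (h𝒞.subset hC₁) (h𝒞.subset hC₂) (h𝒞.2.1 C₁ hC₁ C₂ hC₂ hne)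
      (hprod C₁ hC₁) (hprod C₂ hC₂) hcross,
    fun C hC => hprod C (Finset.mem_of_mem_erase (Finset.mem_of_mem_erase hC))⟩

lemma IsMergeSeq.isPartition_and_producible {L : List (Finset (Finset (ℤ × ℤ)))}
    (hL : IsMergeSeq ts α τ D L) (hD : IsDom α D) (h𝒞 : 𝒞 ∈ L) :
    IsPartition 𝒞 D ∧ ∀ C ∈ 𝒞, Producible ts τ (restrict α C) := by
  obtain ⟨hhead, hchain⟩ := hL
  obtain ⟨L', rfl⟩ := List.head?_eq_some_iff.mp hhead
  refine hchain.induction (fun 𝒞 => IsPartition 𝒞 D ∧ ∀ C ∈ 𝒞, Producible ts τ (restrict α C)) _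
    (fun _ _ hstep h => ⟨hstep.isPartition h.1, hstep.producible hD h.1 h.2⟩) (fun _ => ?_) 𝒞 h𝒞
  refine ⟨isPartition_singletonsPart D, fun C hC => ?_⟩
  obtain ⟨p, hp, rfl⟩ := Finset.mem_image.mp hC
  exact producible_restrict_singleton hD hp

end Merging

def HasMergeablePair {T : Type} (ts : TileSystem T) (α : Assembly T) (τ : ℕ)
    (𝒞 : Finset (Finset (ℤ × ℤ))) : Prop :=
  ∃ C₁ ∈ 𝒞, ∃ C₂ ∈ 𝒞, C₁ ≠ C₂ ∧ τ ≤ strengthBetween ts α C₁ C₂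

namespace BTree.IsAssemblyTree

variable {T : Type} {ts : TileSystem T} {α : Assembly T} {τ : ℕ}
  {𝒞 : Finset (Finset (ℤ × ℤ))} {D : Finset (ℤ × ℤ)}

lemma exists_subset_or_hasMergeablePair {t : BTree} (ht : t.IsAssemblyTree ts α τ)
    (h𝒞 : IsPartition 𝒞 D) (hsub : t.leaves ⊆ D) :
    (∃ C ∈ 𝒞, t.leaves ⊆ C) ∨ HasMergeablePair ts α τ 𝒞 := by
  induction t with
  | leaf x =>
    obtain ⟨C, hC, hxC⟩ := h𝒞.exists_mem (hsub (Finset.mem_singleton_self x))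
    exact .inl ⟨C, hC, Finset.singleton_subset_iff.mpr hxC⟩
  | node l r ihl ihr =>
    obtain ⟨-, hcross, hl, hr⟩ := ht
    obtain ⟨hlD, hrD⟩ := Finset.union_subset_iff.mp hsub
    rcases ihl hl hlD with ⟨C₁, hC₁, hl₁⟩ | hmerge
    · rcases ihr hr hrD with ⟨C₂, hC₂, hr₂⟩ | hmerge
      · by_cases hC : C₁ = C₂
        · subst hC
          exact .inl ⟨C₁, hC₁, Finset.union_subset hl₁ hr₂⟩
        · exact .inr ⟨C₁, hC₁, C₂, hC₂, hC, hcross.trans (strengthBetween_mono hl₁ hr₂)⟩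
      · exact .inr hmerge
    · exact .inr hmerge

lemma hasMergeablePair {Υ : BTree} (hΥ : Υ.IsAssemblyTree ts α τ) (hroot : Υ.leaves = D)
    (h𝒞 : IsPartition 𝒞 D) (hne : 𝒞 ≠ {D}) : HasMergeablePair ts α τ 𝒞 := by
  refine (hΥ.exists_subset_or_hasMergeablePair h𝒞 hroot.le).resolve_left ?_
  rintro ⟨C, hC, hDC⟩
  exact hne (h𝒞.eq_singleton_of_mem ((h𝒞.subset hC).antisymm (hroot ▸ hDC) ▸ hC))

end BTree.IsAssemblyTree

theorem greedy_merging_correct_general {T : Type} (ts : TileSystem T)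
    (τ : ℕ) (α : Assembly T)
    (D : Finset (ℤ × ℤ)) (hD : IsDom α D)
    (Υ : BTree) (hΥ : Υ.IsAssemblyTree ts α τ) (hroot : Υ.leaves = D) :
    (∀ 𝒞 : Finset (Finset (ℤ × ℤ)), IsPartition 𝒞 D → 𝒞 ≠ {D} →
      ∃ C₁ ∈ 𝒞, ∃ C₂ ∈ 𝒞, C₁ ≠ C₂ ∧ τ ≤ strengthBetween ts α C₁ C₂) ∧
    (∀ (L : List (Finset (Finset (ℤ × ℤ)))) (𝒞 : Finset (Finset (ℤ × ℤ))),
      IsMergeSeq ts α τ D L → 𝒞 ∈ L →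
      ∀ C ∈ 𝒞, Producible ts τ (restrict α C)) ∧
    (∀ (L : List (Finset (Finset (ℤ × ℤ)))) (𝒞 : Finset (Finset (ℤ × ℤ))),
      IsMergeSeq ts α τ D L → L.getLast? = some 𝒞 →
      (∀ 𝒞', ¬ MergeStep ts α τ 𝒞 𝒞') → 𝒞 = {D}) := by
  have mergeable (𝒞 : Finset (Finset (ℤ × ℤ))) (h𝒞 : IsPartition 𝒞 D) (hne : 𝒞 ≠ {D}) :
      HasMergeablePair ts α τ 𝒞 :=
    hΥ.hasMergeablePair hroot h𝒞 hne
  refine ⟨mergeable, fun L 𝒞 hL h𝒞 => (hL.isPartition_and_producible hD h𝒞).2, ?_⟩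
  intro L 𝒞 hL hlast hstuck
  by_contra hne
  obtain ⟨C₁, hC₁, C₂, hC₂, hC₁₂, hcross⟩ :=
    mergeable 𝒞 (hL.isPartition_and_producible hD (List.mem_of_getLast? hlast)).1 hne
  exact hstuck _ ⟨C₁, hC₁, C₂, hC₂, hC₁₂, hcross, rfl⟩

/-- Let `α` be producible at temperature `τ`, realized by an
assembly tree `Υ` (a hierarchical division of `dom α` in which the children of
each internal node attach with strength at least `τ`).  Then: (a) every
partition of `dom α` other than `{dom α}` contains a mergeable pair (two parts
with attachment strength ≥ τ); (b) the merges performed by the greedy process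
themselves determine assembly trees — every part of every partition occurring
in a merge sequence is a producible subassembly of `α`; hence (c) every maximal
merge sequence terminates with the partition `{dom α}`, so the greedy process
is a correct decision procedure for producibility of `α`. -/
theorem greedy_merging_correct {T : Type} [Fintype T] (ts : TileSystem T)
    (τ : ℕ) (hτ : 0 < τ) (α : Assembly T)
    (D : Finset (ℤ × ℤ)) (hD : IsDom α D) (hne : D.Nonempty)
    (Υ : BTree) (hΥ : Υ.IsAssemblyTree ts α τ) (hroot : Υ.leaves = D) :
    (∀ 𝒞 : Finset (Finset (ℤ × ℤ)), IsPartition 𝒞 D → 𝒞 ≠ {D} →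
      ∃ C₁ ∈ 𝒞, ∃ C₂ ∈ 𝒞, C₁ ≠ C₂ ∧ τ ≤ strengthBetween ts α C₁ C₂) ∧
    (∀ (L : List (Finset (Finset (ℤ × ℤ)))) (𝒞 : Finset (Finset (ℤ × ℤ))),
      IsMergeSeq ts α τ D L → 𝒞 ∈ L →
      ∀ C ∈ 𝒞, Producible ts τ (restrict α C)) ∧
    (∀ (L : List (Finset (Finset (ℤ × ℤ)))) (𝒞 : Finset (Finset (ℤ × ℤ))),
      IsMergeSeq ts α τ D L → L.getLast? = some 𝒞 →
      (∀ 𝒞', ¬ MergeStep ts α τ 𝒞 𝒞') → 𝒞 = {D}) :=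
  greedy_merging_correct_general ts τ α D hD Υ hΥ hroot
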